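/- Let q ≥ 1 and let w ∈ ℝ^q be the vector with entries wᵢ = 2^{i−1}. For every real positive semidefinite q×q matrix B with unit diagonal, one has wᵀBw ≥ 1. -/

import Mathlib

/-!
Write the positive semidefinite matrix `B` as the Gram matrix of vectors `vᵢ`; the unit diagonal
makes them unit vectors, and `wᵀBw = ‖∑ wᵢ vᵢ‖²`. The last weight `2^(q-1)` exceeds the sum
`2^(q-1) - 1` of the others, so by the triangle inequality `‖∑ wᵢ vᵢ‖ ≥ 1`.
-/

open Matrix

variable {𝕜 n : Type*} [RCLike 𝕜] [Fintype n]

open scoped ComplexOrder in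
theorem Matrix.PosSemidef.exists_eq_gram [DecidableEq n] {B : Matrix n n 𝕜} (hB : B.PosSemidef) :
    ∃ v : n → EuclideanSpace 𝕜 n, B = gram 𝕜 v := by
  open scoped MatrixOrder in
  obtain ⟨A, rfl⟩ := CStarAlgebra.nonneg_iff_eq_star_mul_self.mp hB.nonneg
  refine ⟨fun j ↦ WithLp.toLp 2 (fun i ↦ A i j), ?_⟩
  rw [gram_eq_conjTranspose_mul (EuclideanSpace.basisFun n 𝕜)]
  rfl

theorem Matrix.dotProduct_gram_mulVec_self {E : Type*} [NormedAddCommGroup E]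
    [InnerProductSpace ℝ E] (v : n → E) (x : n → ℝ) :
    x ⬝ᵥ gram ℝ v *ᵥ x = ‖∑ i, x i • v i‖ ^ 2 := by
  rw [← real_inner_self_eq_norm_sq, ← star_dotProduct_gram_mulVec, star_trivial]

theorem norm_last_sub_sum_le_norm_sum {E : Type*} [SeminormedAddCommGroup E] {m : ℕ}
    (f : Fin (m + 1) → E) :
    ‖f (Fin.last m)‖ - ∑ i : Fin m, ‖f i.castSucc‖ ≤ ‖∑ i, f i‖ := by
  rw [Fin.sum_univ_castSucc]
  have := norm_sum_le Finset.univ (fun i : Fin m ↦ f i.castSucc)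
  have := norm_sub_le (∑ i : Fin m, f i.castSucc + f (Fin.last m)) (∑ i : Fin m, f i.castSucc)
  rw [add_sub_cancel_left] at this
  linarith

theorem Fin.sum_two_pow (m : ℕ) : ∑ i : Fin m, (2 : ℝ) ^ (i : ℕ) = 2 ^ m - 1 := by
  rw [Fin.sum_univ_eq_sum_range (fun i ↦ (2 : ℝ) ^ i), geom_sum_eq (by norm_num)]
  norm_num

theorem stmt_4 {q : ℕ} (hq : 1 ≤ q) (w : Fin q → ℝ)
    (hw : ∀ i, w i = 2 ^ (i : ℕ))
    (B : Matrix (Fin q) (Fin q) ℝ)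
    (hB : B.PosSemidef) (hdiag : ∀ i, B i i = 1) :
    1 ≤ w ⬝ᵥ B.mulVec w := by
  obtain ⟨m, rfl⟩ := Nat.exists_eq_add_of_le' hq
  obtain ⟨v, rfl⟩ := hB.exists_eq_gram
  have hv : ∀ i, ‖v i‖ = 1 := fun i ↦ by
    rw [← pow_eq_one_iff_of_nonneg (norm_nonneg _) two_ne_zero, ← real_inner_self_eq_norm_sq,
      ← gram_apply]
    exact hdiag i
  rw [dotProduct_gram_mulVec_self]
  refine one_le_pow₀ ?_
  calc (1 : ℝ) = 2 ^ m - (2 ^ m - 1) := by ring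
    _ = ‖w (Fin.last m) • v (Fin.last m)‖ - ∑ i : Fin m, ‖w i.castSucc • v i.castSucc‖ := by
      simp [norm_smul, hv, hw, Fin.sum_two_pow]
    _ ≤ ‖∑ i, w i • v i‖ := norm_last_sub_sum_le_norm_sum (fun i ↦ w i • v i)
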